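/- For all integers n ≥ 0 and 0 ≤ m ≤ n and all x ∈ [−1,1], the associated Legendre function satisfies P_n^{−m}(x) = (−1)^m · ((n−m)!/(n+m)!) · P_n^m(x). -/
import Mathlib

open scoped Real BigOperators

open Polynomial Finset in
private lemma coeff_id (n m j : ℕ) (hm : m ≤ n) (hj : j ≤ n - m) :
    (n + m).factorial * (n - m).choose j * n.descFactorial (n - m - j) * n.descFactorial j
      = (n - m).factorial * (n + m).choose (m + j) * n.descFactorial (n - j)
        * n.descFactorial (m + j) := by
  have cd : ∀ k, k ≤ n → (n.descFactorial k : ℝ) = n.factorial / (n - k).factorial := by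
    intro k hk
    rw [eq_div_iff (by exact_mod_cast Nat.factorial_ne_zero _)]
    exact_mod_cast (mul_comm ((n-k).factorial) _ ▸ Nat.factorial_mul_descFactorial hk)
  have h1 : n - m - j ≤ n := by omega
  have h2 : j ≤ n := by omega
  have h3 : m + j ≤ n := by omega
  have h4 : n - j ≤ n := by omega
  have h5 : m + j ≤ n + m := by omega
  have e1 : n - (n - m - j) = m + j := by omega
  have e2 : n - (n - j) = j := by omega
  have e4 : n + m - (m + j) = n - j := by omega
  have e5 : n - m - j = (n - m) - j := by omega
  have key : ((n + m).factorial * (n - m).choose j * n.descFactorial (n - m - j)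
        * n.descFactorial j : ℝ)
      = ((n - m).factorial * (n + m).choose (m + j) * n.descFactorial (n - j)
        * n.descFactorial (m + j) : ℝ) := by
    rw [cd _ h1, cd _ h2, cd _ h3, cd _ h4, Nat.cast_choose ℝ hj, Nat.cast_choose ℝ h5,
      e1, e2, e4, show n - (m + j) = n - m - j from by omega]
    have hne : ∀ k : ℕ, (k.factorial : ℝ) ≠ 0 := fun k => by
      exact_mod_cast k.factorial_ne_zero
    field_simp
  exact_mod_cast key

open Polynomial Finset in
private lemma key_poly (n m : ℕ) (hm : m ≤ n) :
    ((n + m).factorial : ℝ[X]) * derivative^[n - m] (((X : ℝ[X]) ^ 2 - 1) ^ n)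
      = (-1 : ℝ[X]) ^ m * ((n - m).factorial : ℝ[X]) * (1 - (X : ℝ[X]) ^ 2) ^ m *
          derivative^[n + m] (((X : ℝ[X]) ^ 2 - 1) ^ n) := by
  have hfac : ((X : ℝ[X]) ^ 2 - 1) = (X - C 1) * (X - C (-1)) := by
    simp only [map_one, map_neg]; ring
  have hsum : ∀ (F : ℕ → ℝ[X]), (∀ k, k < m → F k = 0) → (∀ k, n < k → F k = 0) →
      ∑ k ∈ Finset.range (n + m + 1), F k = ∑ j ∈ Finset.range (n - m + 1), F (m + j) := by
    intro F hz1 hz2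
    have hsp : n + m + 1 = m + ((n - m + 1) + m) := by omega
    rw [hsp, Finset.sum_range_add, Finset.sum_range_add]
    rw [Finset.sum_eq_zero (fun k hk => hz1 k (Finset.mem_range.mp hk)),
      Finset.sum_eq_zero (fun k _ => hz2 (m + (n - m + 1 + k)) (by omega))]
    simp
  rw [hfac, mul_pow]
  rw [Polynomial.iterate_derivative_mul, Polynomial.iterate_derivative_mul]
  simp only [Polynomial.iterate_derivative_X_sub_pow, Nat.succ_eq_add_one]
  rw [hsum _ (fun k hk => by
      rw [Nat.descFactorial_eq_zero_iff_lt.mpr (show n < n + m - k by omega), zero_smul,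
        zero_mul, smul_zero])
    (fun k hk => by
      rw [Nat.descFactorial_eq_zero_iff_lt.mpr hk, zero_smul, mul_zero, smul_zero])]
  rw [Finset.mul_sum, Finset.mul_sum]
  refine Finset.sum_congr rfl fun j hj => ?_
  rw [Finset.mem_range] at hj
  have hj' : j ≤ n - m := by omega
  have e1 : n - (n - m - j) = m + j := by omega
  have e2 : n + m - (m + j) = n - j := by omega
  have e3 : n - (n + m - (m + j)) = j := by omega
  rw [e1, e2, show n - (n - j) = j from by omega]
  have hneg : (1 - (X : ℝ[X]) ^ 2) ^ m = (-1 : ℝ[X]) ^ m * (X - C 1) ^ m * (X - C (-1)) ^ m := by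
    have h : (1 - (X : ℝ[X]) ^ 2) = -1 * ((X - C 1) * (X - C (-1))) := by
      rw [← hfac]; ring
    rw [h, mul_pow, mul_pow, mul_assoc]
  rw [hneg]
  simp only [nsmul_eq_mul]
  have key := coeff_id n m j hm hj'
  calc ((n + m).factorial : ℝ[X]) * (((n - m).choose j : ℝ[X]) *
          ((n.descFactorial (n - m - j) : ℝ[X]) * (X - C 1) ^ (m + j) *
            ((n.descFactorial j : ℝ[X]) * (X - C (-1)) ^ (n - j))))
      = (((n + m).factorial * (n - m).choose j * n.descFactorial (n - m - j)
            * n.descFactorial j : ℕ) : ℝ[X]) * (X - C 1) ^ (m + j) * (X - C (-1)) ^ (n - j) := by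
        push_cast; ring
    _ = (((n - m).factorial * (n + m).choose (m + j) * n.descFactorial (n - j)
            * n.descFactorial (m + j) : ℕ) : ℝ[X]) * (X - C 1) ^ (m + j)
          * (X - C (-1)) ^ (n - j) := by rw [key]
    _ = (-1 : ℝ[X]) ^ m * ((n - m).factorial : ℝ[X]) *
          ((-1 : ℝ[X]) ^ m * (X - C 1) ^ m * (X - C (-1)) ^ m) *
          (((n + m).choose (m + j) : ℝ[X]) * ((n.descFactorial (n - j) : ℝ[X]) * (X - C 1) ^ j *
            ((n.descFactorial (m + j) : ℝ[X]) * (X - C (-1)) ^ (n - (m + j))))) := by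
        rw [show n - j = m + (n - (m + j)) from by omega]
        push_cast
        rw [pow_add, pow_add]
        rw [show ((-1 : ℝ[X]) ^ m * ((n - m).factorial : ℝ[X]) *
          ((-1 : ℝ[X]) ^ m * (X - C 1) ^ m * (X - C (-1)) ^ m)) =
          ((-1 : ℝ[X]) * (-1)) ^ m * ((n - m).factorial : ℝ[X]) *
            ((X - C 1) ^ m * (X - C (-1)) ^ m) from by rw [mul_pow]; ring]
        rw [neg_mul_neg, mul_one, one_pow]
        ring

private lemma iteratedDeriv_eval (k : ℕ) : ∀ (p : Polynomial ℝ) (x : ℝ),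
    iteratedDeriv k (fun y => p.eval y) x = (Polynomial.derivative^[k] p).eval x := by
  induction k with
  | zero => intro p x; simp
  | succ k ih =>
    intro p x
    rw [iteratedDeriv_succ', Function.iterate_succ_apply]
    have hd : deriv (fun y => p.eval y) = fun y => (Polynomial.derivative p).eval y := by
      funext y; exact Polynomial.deriv (p := p)
    rw [hd, ih]

/-- Associated Legendre function `P_n^m` via the Rodrigues-type formula. -/
noncomputable def assocLegendre (n m : ℤ) (x : ℝ) : ℝ :=
  (1 / (2 ^ n.toNat * Nat.factorial n.toNat : ℝ)) *
    (1 - x ^ 2) ^ ((m : ℝ) / 2) *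
    iteratedDeriv (n + m).toNat (fun y : ℝ => (y ^ 2 - 1) ^ n.toNat) x

/-- Spherical harmonic `Y_n^m(θ, φ)`. -/
noncomputable def sphericalHarmonic (n m : ℤ) (θ φ : ℝ) : ℂ :=
  (-1 : ℂ) ^ m *
    (Real.sqrt ((2 * (n : ℝ) + 1) / (4 * Real.pi) *
        (Nat.factorial (n - m).toNat : ℝ) / (Nat.factorial (n + m).toNat : ℝ)) : ℝ) *
    (assocLegendre n m (Real.cos θ) : ℝ) *
    Complex.exp (Complex.I * (m : ℂ) * (φ : ℂ))

/-- `P_n^{−m}(x) = (−1)^m ((n−m)!/(n+m)!) P_n^m(x)` for `0 ≤ m ≤ n`. -/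
theorem assocLegendre_neg_order (n m : ℤ) (hn : 0 ≤ n) (hm1 : 0 ≤ m) (hm2 : m ≤ n)
    (x : ℝ) (hx : x ∈ Set.Icc (-1 : ℝ) 1) :
    assocLegendre n (-m) x
      = (-1 : ℝ) ^ m * ((Nat.factorial (n - m).toNat : ℝ) / (Nat.factorial (n + m).toNat : ℝ))
          * assocLegendre n m x := by
  obtain ⟨hx1, hx2⟩ := hx
  have hmN : m.toNat ≤ n.toNat := by omega
  have h1 : (n + -m).toNat = n.toNat - m.toNat := by omega
  have h2 : (n - m).toNat = n.toNat - m.toNat := by omega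
  have h3 : (n + m).toNat = n.toNat + m.toNat := by omega
  have hmr : ((m : ℤ) : ℝ) = (m.toNat : ℝ) := by norm_cast; omega
  have hmr' : ((-m : ℤ) : ℝ) = -(m.toNat : ℝ) := by push_cast; rw [hmr]
  have hzpow : (-1 : ℝ) ^ m = (-1 : ℝ) ^ m.toNat := by
    conv_lhs => rw [← Int.toNat_of_nonneg hm1]
    rw [zpow_natCast]
  simp only [assocLegendre, h1, h2, h3, hmr, hmr', hzpow]
  -- key identity evaluated at x
  have hfun : ∀ k, iteratedDeriv k (fun y : ℝ => (y ^ 2 - 1) ^ n.toNat) x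
      = (Polynomial.derivative^[k] (((Polynomial.X : Polynomial ℝ) ^ 2 - 1) ^ n.toNat)).eval x := by
    intro k
    rw [show (fun y : ℝ => (y ^ 2 - 1) ^ n.toNat)
        = fun y => ((((Polynomial.X : Polynomial ℝ) ^ 2 - 1) ^ n.toNat)).eval y from by
      funext y; simp]
    exact iteratedDeriv_eval k _ x
  have keyx := congrArg (Polynomial.eval x) (key_poly n.toNat m.toNat hmN)
  simp only [Polynomial.eval_mul, Polynomial.eval_pow, Polynomial.eval_natCast,
    Polynomial.eval_sub, Polynomial.eval_one, Polynomial.eval_neg, Polynomial.eval_X] at keyx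
  rw [← hfun, ← hfun] at keyx
  set D1 := iteratedDeriv (n.toNat - m.toNat) (fun y : ℝ => (y ^ 2 - 1) ^ n.toNat) x with hD1def
  set D2 := iteratedDeriv (n.toNat + m.toNat) (fun y : ℝ => (y ^ 2 - 1) ^ n.toNat) x with hD2def
  by_cases h0 : (1 : ℝ) - x ^ 2 = 0
  · by_cases hM0 : m.toNat = 0
    · have hm0 : m = 0 := by omega
      subst hm0
      have hDD : D1 = D2 := by rw [hD1def, hD2def]; norm_num
      simp only [neg_zero, Int.cast_zero, zero_div, Real.rpow_zero, mul_one, Int.toNat_zero,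
        Nat.sub_zero, Nat.add_zero, zpow_zero, one_mul]
      rw [hDD, div_self (show ((n.toNat).factorial : ℝ) ≠ 0 from by
        exact_mod_cast Nat.factorial_ne_zero _)]
      ring
    · rw [h0, Real.zero_rpow (by
        simp only [ne_eq, div_eq_zero_iff]
        push_neg
        constructor
        · intro h; apply hM0; exact_mod_cast neg_eq_zero.mp h
        · norm_num), Real.zero_rpow (by
        simp only [ne_eq, div_eq_zero_iff]
        push_neg
        exact ⟨by exact_mod_cast hM0, by norm_num⟩)]
      ring
  · have hx2' : x ^ 2 ≤ 1 := by nlinarith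
    have ht : 0 < 1 - x ^ 2 := lt_of_le_of_ne (by linarith) (Ne.symm h0)
    set A := (1 - x ^ 2) ^ ((m.toNat : ℝ) / 2) with hAdef
    have hApos : 0 < A := Real.rpow_pos_of_pos ht _
    have hA2 : A * A = (1 - x ^ 2) ^ m.toNat := by
      rw [hAdef, ← Real.rpow_add ht, ← Real.rpow_natCast (1 - x ^ 2) m.toNat]
      norm_num
    have hnegr : (1 - x ^ 2) ^ (-(m.toNat : ℝ) / 2) = A⁻¹ := by
      rw [show -(m.toNat : ℝ) / 2 = -((m.toNat : ℝ) / 2) from by ring,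
        Real.rpow_neg ht.le, hAdef]
    rw [hnegr]
    have hfac1 : ((n.toNat + m.toNat).factorial : ℝ) ≠ 0 := by
      exact_mod_cast Nat.factorial_ne_zero _
    have hfacn : ((n.toNat).factorial : ℝ) ≠ 0 := by
      exact_mod_cast Nat.factorial_ne_zero _
    have hD1 : D1 = (-1 : ℝ) ^ m.toNat * ((n.toNat - m.toNat).factorial : ℝ) * (A * A) * D2
        / ((n.toNat + m.toNat).factorial : ℝ) := by
      rw [eq_div_iff hfac1, hA2]
      linarith [keyx]
    rw [hD1]
    field_simp
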